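/- arXiv:1110.1800 — 4 statements merged into one kernel-verified Lean document; each statement's English description precedes it below -/
import Mathlib

section
/- Let n ≥ 1, let α₁,…,αₙ < 0, and for κ > 0 and a symmetric matrix of nonnegative distances ℓ_{ij} define the real symmetric matrix Γ(κ) by Γ(κ)_{ij} = −δ_{ij} αᵢ⁻¹ − (1/(2κ)) e^{−κ ℓ_{ij}}. If ℓ and ℓ̃ are two such distance matrices with ℓ_{ij} ≤ ℓ̃_{ij} for all i,j and ℓ_{ij} < ℓ̃_{ij} for at least one pair i ≠ j, then for every κ > 0 the smallest eigenvalue of Γ(κ) (with distances ℓ) is strictly smaller than the smallest eigenvalue of Γ̃(κ) (with distances ℓ̃). -/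
/-!
Let `b` minimise `c ↦ ⟨c, Γ̃ c⟩` on the (compact) unit sphere. As the off-diagonal entries of `Γ̃`
are negative, `|b|` is again a minimiser, so we may take `b ≥ 0`; then `b > 0`, since at a
coordinate `b k = 0` the direction `e k` strictly decreases the form to first order. Now
`Γ ≤ Γ̃` entrywise with one strict entry gives `λ(Γ) ≤ ⟨b, Γ b⟩ < ⟨b, Γ̃ b⟩ = λ(Γ̃)`.
-/

open Matrix Finset Filter Topology

noncomputable section

def unitSphere (ι : Type*) [Fintype ι] : Set (ι → ℝ) := {c | ∑ i, c i ^ 2 = 1}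

/-- For symmetric `A` this is the smallest eigenvalue of `A`. -/
def rayleighInf {ι : Type*} [Fintype ι] (A : Matrix ι ι ℝ) : ℝ :=
  sInf {r : ℝ | ∃ c : ι → ℝ, (∑ i, (c i) ^ 2) = 1 ∧ r = ∑ i, ∑ j, c i * (A i j * c j)}

def kreinMatrix {ι : Type*} [DecidableEq ι] (α : ι → ℝ) (κ : ℝ) (ℓ : ι → ι → ℝ) :
    Matrix ι ι ℝ :=
  fun i j => -(if i = j then (α i)⁻¹ else 0) - (1 / (2 * κ)) * Real.exp (-κ * ℓ i j)

theorem nonneg_of_forall_pos_mul_le {m s : ℝ} (h : ∀ ε > 0, ε * m ≤ s) : 0 ≤ s := by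
  have hlim : Tendsto (fun ε => ε * m) (𝓝[>] 0) (𝓝 0) := by
    simpa using (tendsto_id.mul_const m).mono_left (nhdsWithin_le_nhds (a := (0 : ℝ)))
  exact le_of_tendsto hlim (eventually_nhdsWithin_of_forall h)

section RayleighInf

variable {ι : Type*} [Fintype ι]

theorem isCompact_unitSphere : IsCompact (unitSphere ι) := by
  refine (isCompact_univ_pi fun _ => isCompact_Icc (a := -1) (b := 1)).of_isClosed_subset
    (isClosed_eq (by fun_prop) continuous_const) fun c hc i _ => ?_
  have : c i ^ 2 ≤ 1 := hc ▸ single_le_sum (fun j _ => sq_nonneg (c j)) (mem_univ i)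
  exact abs_le.mp (sq_le_one_iff_abs_le_one _ |>.mp this)

theorem unitSphere_nonempty [Nonempty ι] : (unitSphere ι).Nonempty := by
  classical
  obtain ⟨i⟩ := ‹Nonempty ι›
  exact ⟨Pi.single i 1, by simp [unitSphere, Pi.single_apply]⟩

theorem dotProduct_mulVec_self_eq_sum (A : Matrix ι ι ℝ) (c : ι → ℝ) :
    c ⬝ᵥ A *ᵥ c = ∑ i, ∑ j, c i * (A i j * c j) := by
  simp [dotProduct, mulVec, mul_sum]

theorem rayleighInf_eq_sInf_image (A : Matrix ι ι ℝ) :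
    rayleighInf A = sInf ((fun c => c ⬝ᵥ A *ᵥ c) '' unitSphere ι) := by
  simp only [rayleighInf, unitSphere, dotProduct_mulVec_self_eq_sum, Set.image, eq_comm,
    Set.mem_ofPred_eq]

theorem rayleighInf_le (A : Matrix ι ι ℝ) {c : ι → ℝ} (hc : c ∈ unitSphere ι) :
    rayleighInf A ≤ c ⬝ᵥ A *ᵥ c := by
  rw [rayleighInf_eq_sInf_image]
  exact csInf_le (isCompact_unitSphere.bddBelow_image (by fun_prop)) (Set.mem_image_of_mem _ hc)

theorem rayleighInf_eq_of_isMinOn (A : Matrix ι ι ℝ) {b : ι → ℝ} (hb : b ∈ unitSphere ι)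
    (hmin : IsMinOn (fun c => c ⬝ᵥ A *ᵥ c) (unitSphere ι) b) :
    rayleighInf A = b ⬝ᵥ A *ᵥ b := by
  rw [rayleighInf_eq_sInf_image]
  exact IsLeast.csInf_eq ⟨Set.mem_image_of_mem _ hb, Set.forall_mem_image.2 (isMinOn_iff.1 hmin)⟩

theorem IsMinOn.mul_sum_sq_le {A : Matrix ι ι ℝ} {b : ι → ℝ}
    (hmin : IsMinOn (fun c => c ⬝ᵥ A *ᵥ c) (unitSphere ι) b) (d : ι → ℝ) :
    b ⬝ᵥ A *ᵥ b * ∑ i, d i ^ 2 ≤ d ⬝ᵥ A *ᵥ d := by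
  rcases (sum_nonneg fun i _ => sq_nonneg (d i)).eq_or_lt with hN | hN
  · have hd : d = 0 := funext fun i => by
      simpa using (sum_eq_zero_iff_of_nonneg fun j _ => sq_nonneg (d j)).1 hN.symm i (mem_univ i)
    simp [hd]
  set t := (√(∑ i, d i ^ 2))⁻¹
  have ht : t ^ 2 * ∑ i, d i ^ 2 = 1 := by
    rw [inv_pow, Real.sq_sqrt hN.le, inv_mul_cancel₀ hN.ne']
  have hmem : t • d ∈ unitSphere ι := by
    simp only [unitSphere, Set.mem_ofPred_eq, Pi.smul_apply, smul_eq_mul, mul_pow, ← mul_sum, ht]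
  have hle : b ⬝ᵥ A *ᵥ b ≤ t ^ 2 * (d ⬝ᵥ A *ᵥ d) := by
    simpa only [mulVec_smul, dotProduct_smul, smul_dotProduct, smul_eq_mul, ← mul_assoc, sq]
      using isMinOn_iff.1 hmin _ hmem
  calc b ⬝ᵥ A *ᵥ b * ∑ i, d i ^ 2 ≤ t ^ 2 * (d ⬝ᵥ A *ᵥ d) * ∑ i, d i ^ 2 :=
        mul_le_mul_of_nonneg_right hle hN.le
    _ = d ⬝ᵥ A *ᵥ d := by linear_combination (d ⬝ᵥ A *ᵥ d) * ht

theorem dotProduct_mulVec_abs_le {A : Matrix ι ι ℝ} (hA : ∀ i j, i ≠ j → A i j ≤ 0)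
    (c : ι → ℝ) : |c| ⬝ᵥ A *ᵥ |c| ≤ c ⬝ᵥ A *ᵥ c := by
  simp only [dotProduct_mulVec_self_eq_sum, Pi.abs_apply]
  refine sum_le_sum fun i _ => sum_le_sum fun j _ => ?_
  obtain rfl | hij := eq_or_ne i j
  · exact le_of_eq (by linear_combination A i i * abs_mul_abs_self (c i))
  · calc |c i| * (A i j * |c j|) = A i j * |c i * c j| := by rw [abs_mul]; ring
      _ ≤ A i j * (c i * c j) := mul_le_mul_of_nonpos_left (le_abs_self _) (hA i j hij)
      _ = c i * (A i j * c j) := by ring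

theorem mulVec_apply_neg {A : Matrix ι ι ℝ} (hA : ∀ i j, i ≠ j → A i j < 0) {b : ι → ℝ}
    (hb : 0 ≤ b) (hb0 : b ≠ 0) {k : ι} (hk : b k = 0) : (A *ᵥ b) k < 0 := by
  obtain ⟨j, hj⟩ : ∃ j, b j ≠ 0 := Function.ne_iff.1 hb0
  have hjk : k ≠ j := fun h => hj (h ▸ hk)
  refine sum_neg' (fun i _ => ?_) ⟨j, mem_univ j, mul_neg_of_neg_of_pos (hA k j hjk)
    ((hb j).lt_of_ne' hj)⟩
  obtain rfl | hki := eq_or_ne k i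
  · simp [hk]
  · exact mul_nonpos_of_nonpos_of_nonneg (hA k i hki).le (hb i)

theorem add_smul_single_dotProduct_mulVec [DecidableEq ι] (A : Matrix ι ι ℝ) (b : ι → ℝ)
    (k : ι) (ε : ℝ) :
    (b + ε • Pi.single k 1) ⬝ᵥ A *ᵥ (b + ε • Pi.single k 1) =
      b ⬝ᵥ A *ᵥ b + ε * ((A *ᵥ b) k + (Aᵀ *ᵥ b) k) + ε ^ 2 * A k k := by
  rw [mulVec_transpose, mulVec_add, add_dotProduct, dotProduct_add, dotProduct_add,
    dotProduct_mulVec b A (ε • _)]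
  simp only [mulVec_smul, dotProduct_smul, smul_dotProduct, smul_eq_mul, single_one_dotProduct,
    dotProduct_single_one, mulVec_single_one, col_apply]
  ring

theorem sum_sq_add_smul_single [DecidableEq ι] {b : ι → ℝ} {k : ι} (hk : b k = 0) (ε : ℝ) :
    ∑ i, (b + ε • Pi.single k 1 : ι → ℝ) i ^ 2 = ∑ i, b i ^ 2 + ε ^ 2 := by
  have : ∀ i, (b + ε • Pi.single k 1 : ι → ℝ) i ^ 2 = b i ^ 2 + if i = k then ε ^ 2 else 0 := by
    intro i
    obtain rfl | hik := eq_or_ne i k <;> simp [*]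
  simp only [this, sum_add_distrib, sum_ite_eq', mem_univ, if_true]

theorem pos_of_isMinOn_unitSphere {A : Matrix ι ι ℝ} (hA : ∀ i j, i ≠ j → A i j < 0)
    {b : ι → ℝ} (hb : 0 ≤ b) (hbS : b ∈ unitSphere ι)
    (hmin : IsMinOn (fun c => c ⬝ᵥ A *ᵥ c) (unitSphere ι) b) (k : ι) : 0 < b k := by
  classical
  refine (hb k).lt_of_ne fun hk => ?_
  have hb0 : b ≠ 0 := by rintro rfl; simp [unitSphere] at hbS
  have hs : (A *ᵥ b) k + (Aᵀ *ᵥ b) k < 0 :=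
    add_neg (mulVec_apply_neg hA hb hb0 hk.symm)
      (mulVec_apply_neg (fun i j h => hA j i h.symm) hb hb0 hk.symm)
  refine hs.not_ge (nonneg_of_forall_pos_mul_le (m := b ⬝ᵥ A *ᵥ b - A k k) fun ε hε => ?_)
  have h := hmin.mul_sum_sq_le (b + ε • Pi.single k 1)
  rw [sum_sq_add_smul_single hk.symm, hbS, add_smul_single_dotProduct_mulVec] at h
  exact le_of_mul_le_mul_left (by linear_combination h) hε

theorem exists_pos_isMinOn_unitSphere [Nonempty ι] {A : Matrix ι ι ℝ}
    (hA : ∀ i j, i ≠ j → A i j < 0) :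
    ∃ b, (∀ i, 0 < b i) ∧ b ∈ unitSphere ι ∧
      IsMinOn (fun c => c ⬝ᵥ A *ᵥ c) (unitSphere ι) b := by
  obtain ⟨c, hc, hmin⟩ := isCompact_unitSphere.exists_isMinOn unitSphere_nonempty
    (by fun_prop : Continuous fun c : ι → ℝ => c ⬝ᵥ A *ᵥ c).continuousOn
  have habs : |c| ∈ unitSphere ι := by simpa [unitSphere, Pi.abs_apply, sq_abs] using hc
  have habs_min : IsMinOn (fun c => c ⬝ᵥ A *ᵥ c) (unitSphere ι) |c| := isMinOn_iff.2
    fun d hd => (dotProduct_mulVec_abs_le (fun i j h => (hA i j h).le) c).trans (hmin hd)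
  exact ⟨|c|, pos_of_isMinOn_unitSphere hA (abs_nonneg c) habs habs_min, habs, habs_min⟩

theorem dotProduct_mulVec_lt_of_le_of_lt {A B : Matrix ι ι ℝ} (hle : ∀ i j, A i j ≤ B i j)
    (hlt : ∃ i j, A i j < B i j) {b : ι → ℝ} (hb : ∀ i, 0 < b i) :
    b ⬝ᵥ A *ᵥ b < b ⬝ᵥ B *ᵥ b := by
  obtain ⟨i₀, j₀, h⟩ := hlt
  have hterm (i j : ι) : b i * (A i j * b j) ≤ b i * (B i j * b j) :=
    mul_le_mul_of_nonneg_left (mul_le_mul_of_nonneg_right (hle i j) (hb j).le) (hb i).le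
  simp only [dotProduct_mulVec_self_eq_sum]
  refine sum_lt_sum (fun i _ => sum_le_sum fun j _ => hterm i j)
    ⟨i₀, mem_univ _, sum_lt_sum (fun j _ => hterm i₀ j) ⟨j₀, mem_univ _, ?_⟩⟩
  exact mul_lt_mul_of_pos_left (mul_lt_mul_of_pos_right h (hb j₀)) (hb i₀)

theorem rayleighInf_lt_of_le_of_lt {A B : Matrix ι ι ℝ} (hB : ∀ i j, i ≠ j → B i j < 0)
    (hle : ∀ i j, A i j ≤ B i j) (hlt : ∃ i j, A i j < B i j) :
    rayleighInf A < rayleighInf B := by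
  have : Nonempty ι := let ⟨i, _⟩ := hlt; ⟨i⟩
  obtain ⟨b, hb, hbS, hmin⟩ := exists_pos_isMinOn_unitSphere hB
  calc rayleighInf A ≤ b ⬝ᵥ A *ᵥ b := rayleighInf_le A hbS
    _ < b ⬝ᵥ B *ᵥ b := dotProduct_mulVec_lt_of_le_of_lt hle hlt hb
    _ = rayleighInf B := (rayleighInf_eq_of_isMinOn B hbS hmin).symm

end RayleighInf

section KreinMatrix

variable {ι : Type*} [DecidableEq ι] {α : ι → ℝ} {κ : ℝ} {ℓ ℓ' : ι → ι → ℝ} {i j : ι}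

theorem kreinMatrix_apply_neg (hκ : 0 < κ) (h : i ≠ j) : kreinMatrix α κ ℓ i j < 0 := by
  have : 0 < 1 / (2 * κ) * Real.exp (-κ * ℓ i j) := by positivity
  simp only [kreinMatrix, if_neg h]
  linarith

theorem kreinMatrix_apply_le (hκ : 0 < κ) (h : ℓ i j ≤ ℓ' i j) :
    kreinMatrix α κ ℓ i j ≤ kreinMatrix α κ ℓ' i j := by
  simp only [kreinMatrix, neg_mul]
  gcongr

theorem kreinMatrix_apply_lt (hκ : 0 < κ) (h : ℓ i j < ℓ' i j) :
    kreinMatrix α κ ℓ i j < kreinMatrix α κ ℓ' i j := by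
  simp only [kreinMatrix, neg_mul]
  gcongr

end KreinMatrix

end

theorem krein_matrix_min_eigenvalue_strict_mono_general (n : ℕ)
    (α : Fin n → ℝ)
    (ℓ ℓt : Fin n → Fin n → ℝ)
    (hle : ∀ i j, ℓ i j ≤ ℓt i j)
    (hlt : ∃ i j, i ≠ j ∧ ℓ i j < ℓt i j)
    (κ : ℝ) (hκ : 0 < κ) :
    sInf {r : ℝ | ∃ c : Fin n → ℝ, (∑ i, (c i) ^ 2) = 1 ∧
        r = ∑ i, ∑ j, c i *
          ((-(if i = j then (α i)⁻¹ else 0) - (1 / (2 * κ)) * Real.exp (-κ * ℓ i j)) * c j)} <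
    sInf {r : ℝ | ∃ c : Fin n → ℝ, (∑ i, (c i) ^ 2) = 1 ∧
        r = ∑ i, ∑ j, c i *
          ((-(if i = j then (α i)⁻¹ else 0) - (1 / (2 * κ)) * Real.exp (-κ * ℓt i j)) * c j)} := by
  obtain ⟨i, j, -, hij⟩ := hlt
  exact rayleighInf_lt_of_le_of_lt (A := kreinMatrix α κ ℓ) (fun _ _ => kreinMatrix_apply_neg hκ)
    (fun _ _ => kreinMatrix_apply_le hκ (hle _ _)) ⟨i, j, kreinMatrix_apply_lt hκ hij⟩

/-- Strict monotonicity of the smallest eigenvalue of the Krein matrix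
`Γ(κ)_{ij} = -δ_{ij} αᵢ⁻¹ - (1/(2κ)) e^{-κ ℓ_{ij}}` in the distances: if `ℓ ≤ ℓ̃`
entrywise with strict inequality at some off-diagonal pair, then for every `κ > 0`
the smallest eigenvalue (minimum of the quadratic form over unit vectors) strictly
increases. -/
theorem krein_matrix_min_eigenvalue_strict_mono (n : ℕ) (hn : 1 ≤ n)
    (α : Fin n → ℝ) (hα : ∀ i, α i < 0)
    (ℓ ℓt : Fin n → Fin n → ℝ)
    (hℓ0 : ∀ i j, 0 ≤ ℓ i j) (hℓsym : ∀ i j, ℓ i j = ℓ j i)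
    (hℓt0 : ∀ i j, 0 ≤ ℓt i j) (hℓtsym : ∀ i j, ℓt i j = ℓt j i)
    (hle : ∀ i j, ℓ i j ≤ ℓt i j)
    (hlt : ∃ i j, i ≠ j ∧ ℓ i j < ℓt i j)
    (κ : ℝ) (hκ : 0 < κ) :
    sInf {r : ℝ | ∃ c : Fin n → ℝ, (∑ i, (c i) ^ 2) = 1 ∧
        r = ∑ i, ∑ j, c i *
          ((-(if i = j then (α i)⁻¹ else 0) - (1 / (2 * κ)) * Real.exp (-κ * ℓ i j)) * c j)} <
    sInf {r : ℝ | ∃ c : Fin n → ℝ, (∑ i, (c i) ^ 2) = 1 ∧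
        r = ∑ i, ∑ j, c i *
          ((-(if i = j then (α i)⁻¹ else 0) - (1 / (2 * κ)) * Real.exp (-κ * ℓt i j)) * c j)} :=
  krein_matrix_min_eigenvalue_strict_mono_general n α ℓ ℓt hle hlt κ hκ
end

section
/- A real symmetric n×n matrix A whose off-diagonal entries are all strictly negative has a simple smallest eigenvalue, and the corresponding eigenvector can be chosen with all components strictly positive. -/
/-!
Let `μ` be the smallest eigenvalue of `A`, so that `M = A - μ • 1` is positive semidefinite.
Since the off-diagonal entries of `M` are negative, `|w|ᵀ M |w| ≤ wᵀ M w`, hence `|w|` lies in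
`ker M` whenever `w` does. If moreover `w k = 0`, row `k` of `M |w| = 0` is a sum of nonpositive
terms `M k j * |w j|` with `M k j < 0`, which forces `w = 0`. So nonzero kernel vectors have no
zero entry: the absolute value of an eigenvector is a positive eigenvector, and two kernel vectors
are proportional, since a combination of them vanishing at one entry vanishes everywhere.
-/

open Matrix

namespace Matrix

variable {ι : Type*} [Fintype ι]

lemma IsHermitian.posSemidef_sub_smul_one [DecidableEq ι] {A : Matrix ι ι ℝ} (hA : A.IsHermitian)
    {μ : ℝ} (hμ : ∀ i, μ ≤ hA.eigenvalues i) : (A - μ • 1).PosSemidef := by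
  set U : Matrix ι ι ℝ := (hA.eigenvectorUnitary : Matrix ι ι ℝ) with hU
  have hUU : U * star U = 1 := Unitary.mul_star_self_of_mem hA.eigenvectorUnitary.2
  have hdiag : A - μ • 1 = U * diagonal (fun i ↦ hA.eigenvalues i - μ) * star U := by
    conv_lhs => rw [hA.spectral_theorem, Unitary.conjStarAlgAut_apply, ← hU]
    rw [← diagonal_sub, ← smul_one_eq_diagonal, mul_sub, sub_mul, mul_smul_one, smul_mul, hUU]
    simp
  rw [hdiag, Unitary.isUnit_coe.posSemidef_star_right_conjugate_iff, posSemidef_diagonal_iff]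
  exact fun i ↦ sub_nonneg.mpr (hμ i)

lemma sub_smul_one_mulVec_eq_zero_iff [DecidableEq ι] {A : Matrix ι ι ℝ} {μ : ℝ} {w : ι → ℝ} :
    (A - μ • 1) *ᵥ w = 0 ↔ A *ᵥ w = μ • w := by
  rw [sub_mulVec, smul_mulVec, one_mulVec, sub_eq_zero]

lemma PosSemidef.le_of_mulVec_eq_smul [DecidableEq ι] {A : Matrix ι ι ℝ} {μ μ' : ℝ}
    (hA : (A - μ • 1).PosSemidef) {w : ι → ℝ} (hw : w ≠ 0) (hAw : A *ᵥ w = μ' • w) : μ ≤ μ' := by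
  have hquad : μ * (w ⬝ᵥ w) ≤ μ' * (w ⬝ᵥ w) := by
    simpa [sub_mulVec, smul_mulVec, hAw, sub_smul, dotProduct_sub, dotProduct_smul, mul_sub]
      using hA.dotProduct_mulVec_nonneg w
  exact le_of_mul_le_mul_right hquad (dotProduct_self_star_pos_iff.mpr hw)

variable {M : Matrix ι ι ℝ}

lemma dotProduct_mulVec_abs_le (hoff : ∀ i j, i ≠ j → M i j ≤ 0) (x : ι → ℝ) :
    |x| ⬝ᵥ (M *ᵥ |x|) ≤ x ⬝ᵥ (M *ᵥ x) := by
  simp only [dotProduct, mulVec, Finset.mul_sum, Pi.abs_apply]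
  refine Finset.sum_le_sum fun i _ ↦ Finset.sum_le_sum fun j _ ↦ ?_
  rcases eq_or_ne i j with rfl | hij
  · rw [mul_left_comm, abs_mul_abs_self, mul_left_comm]
  · nlinarith [hoff i j hij, abs_mul_abs_self (x i), le_abs_self (x i * x j), abs_mul (x i) (x j)]

lemma PosSemidef.mulVec_abs_eq_zero (hM : M.PosSemidef) (hoff : ∀ i j, i ≠ j → M i j ≤ 0)
    {x : ι → ℝ} (hx : M *ᵥ x = 0) : M *ᵥ |x| = 0 := by
  refine (hM.dotProduct_mulVec_zero_iff |x|).mp (le_antisymm ?_ (hM.dotProduct_mulVec_nonneg _))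
  simpa [hx] using dotProduct_mulVec_abs_le hoff x

lemma eq_zero_of_nonneg_of_mulVec_apply_eq_zero (hoff : ∀ i j, i ≠ j → M i j < 0) {u : ι → ℝ}
    (hu : 0 ≤ u) {k : ι} (hMu : (M *ᵥ u) k = 0) (huk : u k = 0) : u = 0 := by
  have hterm : ∀ j ∈ Finset.univ, M k j * u j ≤ 0 := fun j _ ↦ by
    rcases eq_or_ne k j with rfl | hkj
    · simp [huk]
    · exact mul_nonpos_of_nonpos_of_nonneg (hoff k j hkj).le (hu j)
  have hzero := (Finset.sum_eq_zero_iff_of_nonpos hterm).mp hMu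
  funext j
  rcases eq_or_ne k j with rfl | hkj
  · exact huk
  · exact (mul_eq_zero.mp (hzero j (Finset.mem_univ j))).resolve_left (hoff k j hkj).ne

lemma PosSemidef.eq_zero_of_mulVec_eq_zero_of_apply_eq_zero (hM : M.PosSemidef)
    (hoff : ∀ i j, i ≠ j → M i j < 0) {w : ι → ℝ} (hw : M *ᵥ w = 0) {k : ι}
    (hwk : w k = 0) : w = 0 := by
  have habs := hM.mulVec_abs_eq_zero (fun i j hij ↦ (hoff i j hij).le) hw
  have := eq_zero_of_nonneg_of_mulVec_apply_eq_zero hoff (abs_nonneg w) (congrFun habs k)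
    (by simp [hwk])
  exact funext fun i ↦ by simpa using congrFun this i

lemma PosSemidef.apply_ne_zero_of_mulVec_eq_zero (hM : M.PosSemidef)
    (hoff : ∀ i j, i ≠ j → M i j < 0) {w : ι → ℝ} (hw : M *ᵥ w = 0) (hw0 : w ≠ 0)
    (k : ι) : w k ≠ 0 :=
  fun hwk ↦ hw0 (hM.eq_zero_of_mulVec_eq_zero_of_apply_eq_zero hoff hw hwk)

lemma PosSemidef.eq_smul_of_mulVec_eq_zero (hM : M.PosSemidef)
    (hoff : ∀ i j, i ≠ j → M i j < 0) {v w : ι → ℝ} (hv : M *ᵥ v = 0) (hw : M *ᵥ w = 0)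
    {k : ι} (hvk : v k ≠ 0) : w = (w k / v k) • v := by
  have hcomb : M *ᵥ (w - (w k / v k) • v) = 0 := by simp [mulVec_sub, mulVec_smul, hv, hw]
  have hcombk : (w - (w k / v k) • v) k = 0 := by
    simp [div_mul_cancel₀ _ hvk]
  exact sub_eq_zero.mp (hM.eq_zero_of_mulVec_eq_zero_of_apply_eq_zero hoff hcomb hcombk)

end Matrix

/-- A real symmetric matrix with strictly negative off-diagonal entries has a simple
smallest eigenvalue whose eigenvector can be chosen strictly positive. -/
theorem perron_frobenius_smallest_eigenvalue (n : ℕ) (hn : 1 ≤ n)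
    (A : Matrix (Fin n) (Fin n) ℝ) (hsym : A.transpose = A)
    (hoff : ∀ i j, i ≠ j → A i j < 0) :
    ∃ (μ : ℝ) (v : Fin n → ℝ),
      A.mulVec v = μ • v ∧ (∀ i, 0 < v i) ∧
      (∀ (μ' : ℝ) (w : Fin n → ℝ), w ≠ 0 → A.mulVec w = μ' • w → μ ≤ μ') ∧
      (∀ w : Fin n → ℝ, A.mulVec w = μ • w → ∃ t : ℝ, w = t • v) := by
  have hA : A.IsHermitian := isHermitian_iff_isSymm.mpr hsym
  let k₀ : Fin n := ⟨0, hn⟩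
  have : Nonempty (Fin n) := ⟨k₀⟩
  obtain ⟨i₀, hi₀⟩ := Finite.exists_min hA.eigenvalues
  set μ := hA.eigenvalues i₀
  have hM : (A - μ • 1).PosSemidef := hA.posSemidef_sub_smul_one hi₀
  have hoffM : ∀ i j, i ≠ j → (A - μ • 1) i j < 0 := fun i j hij ↦ by
    simpa [one_apply_ne hij] using hoff i j hij
  set v₀ := (hA.eigenvectorBasis i₀).ofLp
  have hv₀ : (A - μ • 1) *ᵥ v₀ = 0 :=
    sub_smul_one_mulVec_eq_zero_iff.mpr (hA.mulVec_eigenvectorBasis i₀)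
  have hv₀_ne : v₀ ≠ 0 := fun h ↦
    hA.eigenvectorBasis.orthonormal.ne_zero i₀ (by ext j; exact congrFun h j)
  have hv : (A - μ • 1) *ᵥ |v₀| = 0 := hM.mulVec_abs_eq_zero (fun i j hij ↦ (hoffM i j hij).le) hv₀
  have hv_pos : ∀ i, 0 < |v₀| i := fun i ↦
    abs_pos.mpr (hM.apply_ne_zero_of_mulVec_eq_zero hoffM hv₀ hv₀_ne i)
  have hunique : ∀ w, A *ᵥ w = μ • w → w = (w k₀ / |v₀| k₀) • |v₀| := fun w hw ↦
    hM.eq_smul_of_mulVec_eq_zero hoffM hv (sub_smul_one_mulVec_eq_zero_iff.mpr hw) (hv_pos k₀).ne'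
  exact ⟨μ, |v₀|, sub_smul_one_mulVec_eq_zero_iff.mp hv, hv_pos,
    fun μ' w hw hAw ↦ hM.le_of_mulVec_eq_smul hw hAw, fun w hw ↦ ⟨_, hunique w hw⟩⟩
end

section
/- (Periodic Green's function) For κ > 0 and loop length ℓ > 0, the function G(x) = cosh κ(ℓ − |x|)/(2κ sinh κℓ), defined for |x| ≤ ℓ/2, satisfies: G is even, strictly positive, and strictly decreasing in |x| on [0, ℓ/2]; moreover the map ℓ ↦ cosh κ(ℓ − s)/(2κ sinh κℓ) is strictly decreasing in ℓ for each fixed s ∈ [0, ℓ/2]. -/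
/-- Properties of the periodic Green's function
`G(x) = cosh κ(ℓ - |x|)/(2κ sinh κℓ)` on a loop of length `ℓ`: it is even, strictly
positive, strictly decreasing in `|x|` on `[0, ℓ/2]`, and for fixed `s ≥ 0` the map
`ℓ ↦ cosh κ(ℓ - s)/(2κ sinh κℓ)` is strictly decreasing on `(2s, ∞)`. -/
theorem loop_green_function_monotone (κ ℓ : ℝ) (hκ : 0 < κ) (hℓ : 0 < ℓ) :
    (∀ x : ℝ, |x| ≤ ℓ / 2 →
      Real.cosh (κ * (ℓ - |(-x)|)) / (2 * κ * Real.sinh (κ * ℓ)) =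
        Real.cosh (κ * (ℓ - |x|)) / (2 * κ * Real.sinh (κ * ℓ))) ∧
    (∀ x : ℝ, |x| ≤ ℓ / 2 →
      0 < Real.cosh (κ * (ℓ - |x|)) / (2 * κ * Real.sinh (κ * ℓ))) ∧
    StrictAntiOn (fun s : ℝ => Real.cosh (κ * (ℓ - s)) / (2 * κ * Real.sinh (κ * ℓ)))
      (Set.Icc 0 (ℓ / 2)) ∧
    (∀ s : ℝ, 0 ≤ s →
      StrictAntiOn (fun t : ℝ => Real.cosh (κ * (t - s)) / (2 * κ * Real.sinh (κ * t)))
        (Set.Ioi (2 * s))) := by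
  have hsinh : 0 < Real.sinh (κ * ℓ) := Real.sinh_pos_iff.2 (by positivity)
  refine ⟨fun x _ => by rw [abs_neg], fun x _ => by positivity, ?_, ?_⟩
  · intro a ha b hb hab
    simp only [Set.mem_Icc] at ha hb
    have hC : 0 < 2 * κ * Real.sinh (κ * ℓ) := by positivity
    have hcosh : Real.cosh (κ * (ℓ - b)) < Real.cosh (κ * (ℓ - a)) := by
      rw [Real.cosh_lt_cosh]
      have h1 : 0 < ℓ - b := by linarith
      have h2 : 0 < ℓ - a := by linarith
      rw [abs_of_pos (by positivity), abs_of_pos (by positivity)]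
      nlinarith
    show Real.cosh (κ * (ℓ - b)) / (2 * κ * Real.sinh (κ * ℓ)) <
        Real.cosh (κ * (ℓ - a)) / (2 * κ * Real.sinh (κ * ℓ))
    rw [div_lt_div_iff₀ hC hC]
    nlinarith
  · intro s hs t1 ht1 t2 ht2 h12
    simp only [Set.mem_Ioi] at ht1 ht2
    have h1pos : 0 < t1 := by linarith
    have h2pos : 0 < t2 := by linarith
    have hs1 : 0 < Real.sinh (κ * t1) := Real.sinh_pos_iff.2 (by positivity)
    have hs2 : 0 < Real.sinh (κ * t2) := Real.sinh_pos_iff.2 (by positivity)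
    have key : Real.cosh (κ * (t2 - s)) * Real.sinh (κ * t1) <
        Real.cosh (κ * (t1 - s)) * Real.sinh (κ * t2) := by
      have h1 : Real.sinh (κ * (t1 - s) - κ * t2) < Real.sinh (κ * (t2 - s) - κ * t1) :=
        Real.sinh_lt_sinh.2 (by nlinarith)
      have e1 : κ * (t1 - s) + κ * t2 = κ * (t2 - s) + κ * t1 := by ring
      have A1 := Real.sinh_add (κ * (t1 - s)) (κ * t2)
      have A2 := Real.sinh_add (κ * (t2 - s)) (κ * t1)
      have B1 := Real.sinh_sub (κ * (t1 - s)) (κ * t2)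
      have B2 := Real.sinh_sub (κ * (t2 - s)) (κ * t1)
      rw [e1] at A1
      linarith
    show Real.cosh (κ * (t2 - s)) / (2 * κ * Real.sinh (κ * t2)) <
        Real.cosh (κ * (t1 - s)) / (2 * κ * Real.sinh (κ * t1))
    rw [div_lt_div_iff₀ (by positivity) (by positivity)]
    nlinarith
end

section
/- For the 2×2 case: let α₁, α₂ < 0 and ℓ > 0, and define F(κ, ℓ) = det Γ(κ) where Γ(κ) = [[−1/α₁ − 1/(2κ), −e^{−κℓ}/(2κ)], [−e^{−κℓ}/(2κ), −1/α₂ − 1/(2κ)]]. Then the largest κ > 0 solving F(κ, ℓ) = 0 (the ground-state parameter for two δ-interactions at distance ℓ) is a strictly decreasing function of ℓ. -/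
/-- For two attractive δ-interactions of strengths `α₁, α₂ < 0` at distance `ℓ` on the
line, the largest positive root `κ₀(ℓ)` of the secular equation
`det Γ(κ) = (-1/α₁ - 1/(2κ))(-1/α₂ - 1/(2κ)) - e^{-2κℓ}/(4κ²) = 0` is strictly
decreasing in `ℓ`. -/
theorem two_delta_ground_state_decreasing (α₁ α₂ : ℝ) (hα₁ : α₁ < 0) (hα₂ : α₂ < 0)
    (ℓ₁ ℓ₂ κ₁ κ₂ : ℝ) (hℓ₁ : 0 < ℓ₁) (hℓ : ℓ₁ < ℓ₂)
    (h₁ : IsGreatest {κ : ℝ | 0 < κ ∧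
      (-1 / α₁ - 1 / (2 * κ)) * (-1 / α₂ - 1 / (2 * κ)) -
        Real.exp (-2 * κ * ℓ₁) / (4 * κ ^ 2) = 0} κ₁)
    (h₂ : IsGreatest {κ : ℝ | 0 < κ ∧
      (-1 / α₁ - 1 / (2 * κ)) * (-1 / α₂ - 1 / (2 * κ)) -
        Real.exp (-2 * κ * ℓ₂) / (4 * κ ^ 2) = 0} κ₂) :
    κ₂ < κ₁ := by
  set f : ℝ → ℝ := fun κ => (-1 / α₁ - 1 / (2 * κ)) * (-1 / α₂ - 1 / (2 * κ)) -
      Real.exp (-2 * κ * ℓ₁) / (4 * κ ^ 2) with hf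
  obtain ⟨⟨hκ₂pos, hroot₂⟩, _⟩ := h₂
  -- f κ₂ < 0
  have hfκ₂ : f κ₂ < 0 := by
    have hexp : Real.exp (-2 * κ₂ * ℓ₂) < Real.exp (-2 * κ₂ * ℓ₁) := by
      apply Real.exp_lt_exp.mpr; nlinarith
    have hden : (0:ℝ) < 4 * κ₂ ^ 2 := by positivity
    have heq : f κ₂ = ((-1 / α₁ - 1 / (2 * κ₂)) * (-1 / α₂ - 1 / (2 * κ₂)) -
        Real.exp (-2 * κ₂ * ℓ₂) / (4 * κ₂ ^ 2))
        - (Real.exp (-2 * κ₂ * ℓ₁) - Real.exp (-2 * κ₂ * ℓ₂)) / (4 * κ₂ ^ 2) := by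
      simp only [hf]; ring
    rw [heq, hroot₂]
    have : 0 < (Real.exp (-2 * κ₂ * ℓ₁) - Real.exp (-2 * κ₂ * ℓ₂)) / (4 * κ₂ ^ 2) :=
      div_pos (by linarith) hden
    linarith
  -- choose M large with f M > 0
  set M : ℝ := max (κ₂ + 1) (max (-α₁) (-α₂)) with hM
  have hMκ₂ : κ₂ + 1 ≤ M := le_max_left _ _
  have hMpos : 0 < M := lt_of_lt_of_le (by linarith) hMκ₂
  have ha : (0:ℝ) < -1/α₁ := div_pos_of_neg_of_neg (by norm_num) hα₁
  have hb : (0:ℝ) < -1/α₂ := div_pos_of_neg_of_neg (by norm_num) hα₂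
  have hMa : -α₁ ≤ M := le_trans (le_max_left _ _) (le_max_right _ _)
  have hMb : -α₂ ≤ M := le_trans (le_max_right _ _) (le_max_right _ _)
  have hfM : 0 < f M := by
    have h1 : 1 / (2 * M) ≤ (-1/α₁) / 2 := by
      rw [div_le_div_iff₀ (by positivity) (by norm_num)]
      have h1' : -α₁ * (-1/α₁) = 1 := by field_simp; exact div_self (ne_of_lt hα₁)
      nlinarith [mul_le_mul_of_nonneg_right hMa (le_of_lt ha)]
    have h2 : 1 / (2 * M) ≤ (-1/α₂) / 2 := by
      rw [div_le_div_iff₀ (by positivity) (by norm_num)]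
      have h2' : -α₂ * (-1/α₂) = 1 := by field_simp; exact div_self (ne_of_lt hα₂)
      nlinarith [mul_le_mul_of_nonneg_right hMb (le_of_lt hb)]
    have hfac1 : 1 / (2 * M) ≤ -1/α₁ - 1 / (2 * M) := by linarith
    have hfac2 : 1 / (2 * M) ≤ -1/α₂ - 1 / (2 * M) := by linarith
    have hpos : (0:ℝ) < 1 / (2 * M) := by positivity
    have hprod : 1 / (2*M) * (1 / (2*M)) ≤
        (-1/α₁ - 1 / (2 * M)) * (-1/α₂ - 1 / (2 * M)) :=
      mul_le_mul hfac1 hfac2 (le_of_lt hpos) (by linarith)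
    have hsq : 1 / (2*M) * (1 / (2*M)) = 1 / (4 * M ^ 2) := by
      field_simp; ring
    have hexp : Real.exp (-2 * M * ℓ₁) < 1 := by
      rw [Real.exp_lt_one_iff]; nlinarith
    have hexpdiv : Real.exp (-2 * M * ℓ₁) / (4 * M ^ 2) < 1 / (4 * M ^ 2) :=
      (div_lt_div_iff_of_pos_right (by positivity)).mpr hexp
    simp only [hf]
    nlinarith
  -- continuity of f on Icc κ₂ M
  have hcont : ContinuousOn f (Set.Icc κ₂ M) := by
    have hne : ∀ x ∈ Set.Icc κ₂ M, x ≠ 0 := fun x hx => by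
      have := hx.1; intro h; rw [h] at this; linarith
    apply ContinuousOn.sub
    · apply ContinuousOn.mul <;>
        exact ContinuousOn.sub continuousOn_const
          (ContinuousOn.div continuousOn_const (by fun_prop)
            (fun x hx => by have := hne x hx; positivity))
    · exact ContinuousOn.div (by fun_prop) (by fun_prop)
        (fun x hx => by have := hne x hx; positivity)
  have hle : κ₂ ≤ M := by linarith
  have hivt := intermediate_value_Icc hle hcont
  have h0 : (0:ℝ) ∈ Set.Icc (f κ₂) (f M) := ⟨le_of_lt hfκ₂, le_of_lt hfM⟩
  obtain ⟨c, hc, hfc⟩ := hivt h0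
  have hcκ₂ : κ₂ < c := by
    rcases lt_or_eq_of_le hc.1 with h | h
    · exact h
    · exfalso; rw [← h] at hfc; rw [hfc] at hfκ₂; exact lt_irrefl 0 hfκ₂
  have hcmem : c ∈ {κ : ℝ | 0 < κ ∧
      (-1 / α₁ - 1 / (2 * κ)) * (-1 / α₂ - 1 / (2 * κ)) -
        Real.exp (-2 * κ * ℓ₁) / (4 * κ ^ 2) = 0} := ⟨by linarith, hfc⟩
  exact lt_of_lt_of_le hcκ₂ (h₁.2 hcmem)
end
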